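/- Let A ∈ ℝ_max^{n×n} and let C₁ and C₂ be ε-maximal multi-circuits of G(A) such that the map ξ_{A,C₂} is well defined (i.e., with K = V(C₂), the graph of M := [A_{C₂}]_{KK}^{−1} ⊗ [A_{∖C₂}]_{KK} has no circuit of nonnegative weight). If x ∈ ℝ_max^n satisfies A_{∖C₁} ⊗ x = A_{C₁} ⊗ x (that is, x ∈ W(A,ε,C₁)), then ξ_{A,C₂}(x) ≥ x entrywise. -/

import Mathlib

open Filter

noncomputable section

/-- The max-plus semiring ℝ_max = ℝ ∪ {ε}, with ε = ⊥ = −∞,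
`a ⊕ b = max a b` and `a ⊗ b = a + b` (the `Add` of `WithBot ℝ`). -/
abbrev RMax : Type := WithBot ℝ

/-- Max-plus vectors. -/
abbrev Vec (ι : Type) : Type := ι → RMax

/-- The max-plus zero vector ℰ. -/
def zeroV (ι : Type) : Vec ι := fun _ => (⊥ : RMax)

/-- Max-plus "negation" (inversion for ⊗), fixing ⊥. -/
def mpNeg (a : RMax) : RMax := WithBot.map (fun r : ℝ => -r) a

section Defs

variable {ι κ₁ κ₂ κ₃ : Type}

/-- Matrix (or vector) sum `M ⊕ N`, entrywise max. -/
def mpAddM (M N : Matrix κ₁ κ₂ RMax) : Matrix κ₁ κ₂ RMax := fun i j => max (M i j) (N i j)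

/-- Scalar multiplication `l ⊗ M` of a matrix. -/
def smulM (l : RMax) (M : Matrix κ₁ κ₂ RMax) : Matrix κ₁ κ₂ RMax := fun i j => l + M i j

/-- Scalar multiplication `l ⊗ x` of a vector. -/
def smulV (l : RMax) (x : Vec ι) : Vec ι := fun i => l + x i

/-- Max-plus matrix product `M ⊗ N`. -/
def mpMul [Fintype κ₂] (M : Matrix κ₁ κ₂ RMax) (N : Matrix κ₂ κ₃ RMax) : Matrix κ₁ κ₃ RMax :=
  fun i j => Finset.univ.sup fun k => M i k + N k j

/-- Max-plus matrix-vector product `M ⊗ x`. -/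
def mpMulVec [Fintype κ₂] (M : Matrix κ₁ κ₂ RMax) (x : Vec κ₂) : Vec κ₁ :=
  fun i => Finset.univ.sup fun j => M i j + x j

/-- The max-plus identity matrix `E_n` (0 on the diagonal, ε elsewhere). -/
def mpId [DecidableEq ι] : Matrix ι ι RMax := fun i j => if i = j then (0 : RMax) else ⊥

/-- Max-plus inverse of a generalized permutation matrix:
the transpose with the finite entries negated. -/
def genInv (P : Matrix ι ι RMax) : Matrix ι ι RMax := fun i j => mpNeg (P j i)

/-- The max-plus determinant `det A = ⊕_π ⊗_i a_{i π(i)}`. -/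
def mpDet [Fintype ι] [DecidableEq ι] (A : Matrix ι ι RMax) : RMax :=
  Finset.univ.sup fun π : Equiv.Perm ι => ∑ i, A i (π i)

/-- Max-plus matrix powers. -/
def mpPow [Fintype ι] [DecidableEq ι] (P : Matrix ι ι RMax) : ℕ → Matrix ι ι RMax
  | 0 => mpId
  | k + 1 => mpMul P (mpPow P k)

/-- The Kleene star `P* = E ⊕ P ⊕ P^{⊗2} ⊕ ⋯ ⊕ P^{⊗(n−1)}`. -/
def mpStar [Fintype ι] [DecidableEq ι] (P : Matrix ι ι RMax) : Matrix ι ι RMax :=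
  fun i j => (Finset.range (Fintype.card ι)).sup fun k => mpPow P k i j

/-- A multi-circuit on the vertex set `ι`: a union of vertex-disjoint elementary circuits,
encoded by its vertex set `verts` together with the successor permutation `perm`,
which is the identity outside `verts`.  Its edge set is `{(i, perm i) | i ∈ verts}`
and its length is `verts.card`. -/
structure MultiCircuit (ι : Type) where
  verts : Finset ι
  perm : Equiv.Perm ι
  fixes : ∀ i, i ∉ verts → perm i = i

/-- The weight `w(C)` of a multi-circuit with respect to the matrix `A`. -/
def mcWeight (A : Matrix ι ι RMax) (C : MultiCircuit ι) : RMax :=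
  ∑ i ∈ C.verts, A i (C.perm i)

/-- The multi-circuit `C` lies in the graph `G(A)` (all its edges have weight ≠ ε). -/
def InGraph (A : Matrix ι ι RMax) (C : MultiCircuit ι) : Prop :=
  ∀ i ∈ C.verts, A i (C.perm i) ≠ ⊥

/-- A multi-circuit consisting of a single (elementary) circuit. -/
def IsCircuit (C : MultiCircuit ι) : Prop :=
  C.verts.Nonempty ∧ ∀ i ∈ C.verts, ∀ j ∈ C.verts, C.perm.SameCycle i j

/-- `D` is a critical circuit of `G(A)`: an elementary circuit of `G(A)` whose average
weight is maximal among all elementary circuits of `G(A)`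
(averages `w/ℓ` are compared without division via `ℓ' • w ≥ ℓ • w'`). -/
def IsCritical (A : Matrix ι ι RMax) (D : MultiCircuit ι) : Prop :=
  IsCircuit D ∧ InGraph A D ∧
    ∀ D' : MultiCircuit ι, IsCircuit D' → InGraph A D' →
      D.verts.card • mcWeight A D' ≤ D'.verts.card • mcWeight A D

/-- `ρ` is the maximum average weight of the (elementary) circuits of `G(A)`,
taken to be ε if `G(A)` has no circuit. -/
def IsMaxCycleMean (A : Matrix ι ι RMax) (ρ : RMax) : Prop :=
  (∀ D : MultiCircuit ι, IsCircuit D → InGraph A D → mcWeight A D ≤ D.verts.card • ρ) ∧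
    ((∃ D : MultiCircuit ι, IsCircuit D ∧ InGraph A D ∧ mcWeight A D = D.verts.card • ρ) ∨
      (ρ = ⊥ ∧ ∀ D : MultiCircuit ι, IsCircuit D → ¬InGraph A D))

/-- `l` is a (geometric) eigenvalue of `A`: `A ⊗ x = l ⊗ x` for some `x ≠ ℰ`. -/
def IsEigen [Fintype ι] (A : Matrix ι ι RMax) (l : RMax) : Prop :=
  ∃ x : Vec ι, x ≠ zeroV ι ∧ mpMulVec A x = smulV l x

variable [Fintype ι] [DecidableEq ι]

/-- The value `w(C) ⊗ l^{⊗(n − ℓ(C))}` of the term of `χ_A(l)` corresponding to the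
multi-circuit `C`. -/
def ValAt (A : Matrix ι ι RMax) (C : MultiCircuit ι) (l : RMax) : RMax :=
  mcWeight A C + (Fintype.card ι - C.verts.card) • l

/-- `C` is `μ`-maximal (for a real `μ`): it attains
`χ_A(μ) = max_C (w(C) + (n − ℓ(C))·μ)`. -/
def MaximalAt (A : Matrix ι ι RMax) (C : MultiCircuit ι) (μ : ℝ) : Prop :=
  ∀ C' : MultiCircuit ι, ValAt A C' (μ : RMax) ≤ ValAt A C (μ : RMax)

/-- `C` is `l`-maximal, for `l ∈ ℝ_max`; for `l = ε` this means `μ`-maximal for all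
sufficiently small real `μ`. -/
def IsLamMax (A : Matrix ι ι RMax) (C : MultiCircuit ι) (l : RMax) : Prop :=
  (∀ μ : ℝ, l = (μ : RMax) → MaximalAt A C μ) ∧
    (l = ⊥ → ∃ μ₀ : ℝ, ∀ μ : ℝ, μ ≤ μ₀ → MaximalAt A C μ)

/-- `l` is an algebraic eigenvalue of `A`, i.e. a root of the characteristic polynomial
`χ_A(t)`: a real `l` is a root iff there are two `l`-maximal multi-circuits of different
lengths, and `ε` is a root iff `G(A)` contains no multi-circuit of length `n`. -/
def IsAlgEigen (A : Matrix ι ι RMax) (l : RMax) : Prop :=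
  (l ≠ ⊥ ∧ ∃ C C' : MultiCircuit ι, IsLamMax A C l ∧ IsLamMax A C' l ∧
      C.verts.card ≠ C'.verts.card) ∨
    (l = ⊥ ∧ ∀ C : MultiCircuit ι, C.verts.card = Fintype.card ι → ¬InGraph A C)

open Classical in
/-- The multiplicity of `l` as a root of the characteristic polynomial `χ_A(t)`:
for a real `l` it is the difference between the maximal and the minimal length of an
`l`-maximal multi-circuit; for `l = ε` it is `n` minus the maximal length of a
multi-circuit of `G(A)`.  It is `0` when `l` is not a root. -/
noncomputable def rootMult (A : Matrix ι ι RMax) (l : RMax) : ℕ :=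
  if l = ⊥ then
    Fintype.card ι - sSup {m : ℕ | ∃ C : MultiCircuit ι, InGraph A C ∧ C.verts.card = m}
  else
    sSup {m : ℕ | ∃ C : MultiCircuit ι, IsLamMax A C l ∧ C.verts.card = m} -
      sInf {m : ℕ | ∃ C : MultiCircuit ι, IsLamMax A C l ∧ C.verts.card = m}

/-- The matrix `A_C`. -/
def matC (A : Matrix ι ι RMax) (C : MultiCircuit ι) : Matrix ι ι RMax :=
  fun i j => if i ∈ C.verts ∧ j = C.perm i then A i j else ⊥

/-- The matrix `A_{∖C}`. -/
def matNotC (A : Matrix ι ι RMax) (C : MultiCircuit ι) : Matrix ι ι RMax :=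
  fun i j => if i ∈ C.verts ∧ j = C.perm i then ⊥ else A i j

/-- The diagonal matrix `E_C`. -/
def eC (C : MultiCircuit ι) : Matrix ι ι RMax :=
  fun i j => if i = j ∧ i ∈ C.verts then (0 : RMax) else ⊥

/-- The diagonal matrix `E_{∖C}`. -/
def eNotC (C : MultiCircuit ι) : Matrix ι ι RMax :=
  fun i j => if i = j ∧ i ∉ C.verts then (0 : RMax) else ⊥

/-- `W(A,l,C) = {x : (A_{∖C} ⊕ l ⊗ E_C) ⊗ x = (A_C ⊕ l ⊗ E_{∖C}) ⊗ x}`. -/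
def WAC (A : Matrix ι ι RMax) (l : RMax) (C : MultiCircuit ι) : Set (Vec ι) :=
  {x | mpMulVec (mpAddM (matNotC A C) (smulM l (eC C))) x =
       mpMulVec (mpAddM (matC A C) (smulM l (eNotC C))) x}

/-- `B_{A,l,C} = (A_C ⊕ l ⊗ E_{∖C})^{−1} ⊗ (A_{∖C} ⊕ l ⊗ E_C)`. -/
def Bmat (A : Matrix ι ι RMax) (l : RMax) (C : MultiCircuit ι) : Matrix ι ι RMax :=
  mpMul (genInv (mpAddM (matC A C) (smulM l (eNotC C)))) (mpAddM (matNotC A C) (smulM l (eC C)))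

/-- Assumption (★): for each `l ∈ ℝ_max`, any two distinct `l`-maximal multi-circuits
of `G(A)` have different lengths. -/
def StarAssumption (A : Matrix ι ι RMax) : Prop :=
  ∀ l : RMax, ∀ C C' : MultiCircuit ι, IsLamMax A C l → IsLamMax A C' l →
    C.verts.card = C'.verts.card → C = C'

/-- The perturbed matrix `A(ζ;δ)` with entries `a_{ij} − ζ_{ij}·δ` (ε stays ε). -/
def perturb (A : Matrix ι ι RMax) (ζ : Matrix ι ι ℝ) (δ : ℝ) : Matrix ι ι RMax :=
  fun i j => A i j + ((-(ζ i j * δ) : ℝ) : RMax)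

/-- The set `Z` of perturbation directions `ζ ∈ [0,1]^{n×n}` for which `A(ζ;δ)`
satisfies (★) for all sufficiently small `δ > 0`. -/
def Zset (A : Matrix ι ι RMax) : Set (Matrix ι ι ℝ) :=
  {ζ | (∀ i j, ζ i j ∈ Set.Icc (0 : ℝ) 1) ∧
    ∃ δ' : ℝ, 0 < δ' ∧ ∀ δ : ℝ, 0 < δ → δ < δ' → StarAssumption (perturb A ζ δ)}

/-- The interval `B(l, r) = [l − r, l + r] ⊆ ℝ_max` (and `B(ε, r) = {ε}`). -/
def mpBall (l : RMax) (r : ℝ) : Set RMax :=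
  {l' | (l = ⊥ ∧ l' = ⊥) ∨ ∃ x y : ℝ, l = (x : RMax) ∧ l' = (y : RMax) ∧ |y - x| ≤ r}

/-- Convergence in `ℝ_max` as `δ → +0`. -/
def RMaxTendsto (f : ℝ → RMax) (a : RMax) : Prop :=
  (a = ⊥ → ∀ M : ℝ, ∀ᶠ δ in nhdsWithin 0 (Set.Ioi (0 : ℝ)), f δ < (M : RMax)) ∧
    (∀ x : ℝ, a = (x : RMax) → ∀ ε : ℝ, 0 < ε →
      ∀ᶠ δ in nhdsWithin 0 (Set.Ioi (0 : ℝ)), ∃ y : ℝ, f δ = (y : RMax) ∧ |y - x| < ε)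

/-- The (max-plus) sum `⊕_k U_k` of a family of subsets of `ℝ_max^n`. -/
def setSum {κ : Type} (U : κ → Set (Vec ι)) : Set (Vec ι) :=
  {x | ∃ s : Finset κ, ∃ f : κ → Vec ι, (∀ k ∈ s, f k ∈ U k) ∧
    x = fun i => s.sup fun k => f k i}

/-- The limit `lim_{δ→+0} S(δ)` of a parametrized family of subsets of `ℝ_max^n`. -/
def setLim (S : ℝ → Set (Vec ι)) : Set (Vec ι) :=
  {x | ∃ g : ℝ → Vec ι, (∀ δ : ℝ, 0 < δ → g δ ∈ S δ) ∧
    ∀ i : ι, RMaxTendsto (fun δ => g δ i) (x i)}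

/-- The sum `⊕_{l' ∈ S} W(A', l', C_{l'})`, where `C_{l'}` is an `l'`-maximal
multi-circuit of `G(A')`. -/
def perturbSum (A' : Matrix ι ι RMax) (S : Set RMax) : Set (Vec ι) :=
  setSum fun l : S =>
    {x | ∃ C : MultiCircuit ι, IsLamMax A' C (l : RMax) ∧ x ∈ WAC A' (l : RMax) C}

/-- The algebraic eigenspace
`W(A,l) = ⋂_{ζ∈Z} lim_{δ→+0} ⊕_{l' ∈ B(l,nδ)} W(A(ζ;δ), l', C_{l'}(ζ;δ))`. -/
def algEigenspace (A : Matrix ι ι RMax) (l : RMax) : Set (Vec ι) :=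
  ⋂ ζ ∈ Zset A, setLim fun δ => perturbSum (perturb A ζ δ) (mpBall l (Fintype.card ι * δ))

/-- The max-plus span of a set of vectors: all finite max-plus linear combinations. -/
def mpSpan (S : Set (Vec ι)) : Set (Vec ι) :=
  {x | ∃ s : Finset (Vec ι), ↑s ⊆ S ∧ ∃ c : Vec ι → RMax,
    x = fun i => s.sup fun v => c v + v i}

/-- `B` is a basis of `U`: a minimal spanning set. -/
def IsBasis (B U : Set (Vec ι)) : Prop :=
  mpSpan B = U ∧ ∀ B' : Set (Vec ι), B' ⊆ B → mpSpan B' = U → B' = B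

/-- Tropical orthogonality: the maximum in `ᵗx ⊗ y = ⊕_i x_i ⊗ y_i` is attained
at least twice (a maximum equal to ε counting as attained by all indices). -/
def Orthogonal (x y : Vec ι) : Prop :=
  (Finset.univ.sup fun i => x i + y i) = ⊥ ∨
    ∃ i j : ι, i ≠ j ∧ x i + y i = (Finset.univ.sup fun k => x k + y k) ∧
      x j + y j = (Finset.univ.sup fun k => x k + y k)

/-- The tropical kernel of a matrix: vectors for which, in every row, the maximum is
attained at least twice (a maximum equal to ε counting as attained by all indices). -/
def tropKernel {κ : Type} (A : Matrix κ ι RMax) : Set (Vec ι) :=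
  {x | ∀ i : κ, (Finset.univ.sup fun j => A i j + x j) = ⊥ ∨
    ∃ j k : ι, j ≠ k ∧ A i j + x j = (Finset.univ.sup fun j' => A i j' + x j') ∧
      A i k + x k = (Finset.univ.sup fun j' => A i j' + x j')}

/-- `A` is (tropically) nonsingular: the maximum in `det A` is attained by exactly
one permutation. -/
def Nonsingular (A : Matrix ι ι RMax) : Prop :=
  ∃! π : Equiv.Perm ι, (∑ i, A i (π i)) = mpDet A

/-- The minor `A^{(r,c)}`, deleting row `r` and column `c`. -/
def mpMinor {n : ℕ} (A : Matrix (Fin (n + 1)) (Fin (n + 1)) RMax) (r c : Fin (n + 1)) :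
    Matrix (Fin n) (Fin n) RMax :=
  fun i j => A (r.succAbove i) (c.succAbove j)

/-- The max-plus adjugate, `adj(A)_{ij} = det A^{(j,i)}`. -/
def mpAdj {n : ℕ} (A : Matrix (Fin (n + 1)) (Fin (n + 1)) RMax) :
    Matrix (Fin (n + 1)) (Fin (n + 1)) RMax :=
  fun i j => mpDet (mpMinor A j i)

/-- The submatrix `[A_C]_{KK}` with `K = V(C)`. -/
def subPC (A : Matrix ι ι RMax) (C : MultiCircuit ι) :
    Matrix {k // k ∈ C.verts} {k // k ∈ C.verts} RMax :=
  fun i j => matC A C i.1 j.1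

/-- The submatrix `[A_{∖C}]_{KK}` with `K = V(C)`. -/
def subPNC (A : Matrix ι ι RMax) (C : MultiCircuit ι) :
    Matrix {k // k ∈ C.verts} {k // k ∈ C.verts} RMax :=
  fun i j => matNotC A C i.1 j.1

/-- The matrix `M = [A_C]_{KK}^{−1} ⊗ [A_{∖C}]_{KK}`. -/
def xiM (A : Matrix ι ι RMax) (C : MultiCircuit ι) :
    Matrix {k // k ∈ C.verts} {k // k ∈ C.verts} RMax :=
  mpMul (genInv (subPC A C)) (subPNC A C)

/-- `M* ⊗ ([A_C]_{KK}^{−1} ⊗ [A]_{KL}) ⊗ [x]_L`, the `K`-part of `ξ_{A,C}(x)`. -/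
def xiVec (A : Matrix ι ι RMax) (C : MultiCircuit ι) (x : Vec ι) : Vec {k // k ∈ C.verts} :=
  mpMulVec (mpStar (xiM A C)) (mpMulVec (genInv (subPC A C))
    (fun k : {k // k ∈ C.verts} =>
      (Finset.univ.filter fun j : ι => j ∉ C.verts).sup fun j => A k.1 j + x j))

/-- The linear map `ξ_{A,C} : ℝ_max^n → ℝ_max^n`. -/
def xi (A : Matrix ι ι RMax) (C : MultiCircuit ι) (x : Vec ι) : Vec ι :=
  fun i => if h : i ∈ C.verts then xiVec A C x ⟨i, h⟩ else x i

end Defs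

end

/-!
Since `x ∈ W(A, ε, C₁)`, in every row of `A ⊗ x` the maximum is attained at least twice (or is
`ε`), so the `C₂`-term of each row is dominated by the other terms.  With `K = V(C₂)` this says
`[x]_K ≤ M ⊗ [x]_K ⊕ b`, where `b = [A_{C₂}]_{KK}^{−1} ⊗ [A]_{KL} ⊗ [x]_L`.  As every circuit of
`M` is negative, this forces `[x]_K ≤ M* ⊗ b = [ξ_{A,C₂}(x)]_K`: at an index where it fails, the
maximizing terms of `M ⊗ [x]_K` lead to another such index, and following them produces a closed
walk of negative weight along which `x` does not decrease.
-/

open Finset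

section MaxPlusArith

lemma add_mpNeg_add {a : RMax} (ha : a ≠ ⊥) (u : RMax) : a + (mpNeg a + u) = u := by
  lift a to ℝ using ha
  rw [← add_assoc, mpNeg, WithBot.map_coe, ← WithBot.coe_add, add_neg_cancel, WithBot.coe_zero,
    zero_add]

lemma add_finset_sup {κ : Type} (a : RMax) (s : Finset κ) (f : κ → RMax) :
    a + s.sup f = s.sup fun b => a + f b :=
  apply_sup_eq_sup_comp_of_linearOrder (a + ·) (fun _ _ h => add_le_add_right h a)
    (WithBot.add_bot a)

lemma Finset.sup_eq_of_forall_ne_eq_bot {α β : Type} [SemilatticeSup α] [OrderBot α]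
    {s : Finset β} {f : β → α} {c : β} (hc : c ∈ s) (h : ∀ j ∈ s, j ≠ c → f j = ⊥) :
    s.sup f = f c := by
  refine le_antisymm (Finset.sup_le fun j hj => ?_) (le_sup hc)
  by_cases hjc : j = c
  · rw [hjc]
  · rw [h j hj hjc]
    exact bot_le

lemma le_sup_erase_of_sup_erase_eq {α β : Type} [Fintype β] [DecidableEq β] [SemilatticeSup α]
    [OrderBot α] {f : β → α} {c : β} (h : (univ.erase c).sup f = f c) (j : β) :
    f j ≤ (univ.erase j).sup f := by
  by_cases hjc : j = c
  · rw [hjc, h]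
  · calc f j ≤ (univ.erase c).sup f := le_sup (mem_erase.mpr ⟨hjc, mem_univ j⟩)
      _ = f c := h
      _ ≤ (univ.erase j).sup f := le_sup (mem_erase.mpr ⟨Ne.symm hjc, mem_univ c⟩)

end MaxPlusArith

section Circuits

variable {ι : Type}

lemma MultiCircuit.perm_symm_mem (C : MultiCircuit ι) {k : ι} (hk : k ∈ C.verts) :
    C.perm.symm k ∈ C.verts := by
  by_contra h
  have hfix := C.fixes _ h
  rw [Equiv.apply_symm_apply] at hfix
  exact h (hfix ▸ hk)

lemma inGraph_of_mcWeight_ne_bot {A : Matrix ι ι RMax} {C : MultiCircuit ι}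
    (h : mcWeight A C ≠ ⊥) : InGraph A C :=
  fun i hi hbot => h (WithBot.sum_eq_bot_iff.mpr ⟨i, hi, hbot⟩)

variable [Fintype ι] {A : Matrix ι ι RMax} {C : MultiCircuit ι}

/-- Compared with the empty multi-circuit, whose value `n • μ` is finite. -/
lemma MaximalAt.inGraph {μ : ℝ} (h : MaximalAt A C μ) : InGraph A C := by
  refine inGraph_of_mcWeight_ne_bot fun hC => ?_
  have hle := h ⟨∅, 1, fun _ _ => rfl⟩
  rw [ValAt, ValAt, hC, WithBot.bot_add, le_bot_iff] at hle
  rw [mcWeight, Finset.sum_empty, zero_add, ← WithBot.coe_nsmul] at hle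
  exact WithBot.coe_ne_bot hle

lemma IsLamMax.inGraph {l : RMax} (h : IsLamMax A C l) : InGraph A C := by
  induction l using WithBot.recBotCoe with
  | bot =>
    obtain ⟨μ₀, hμ₀⟩ := h.2 rfl
    exact (hμ₀ μ₀ le_rfl).inGraph
  | coe μ => exact (h.1 μ rfl).inGraph

end Circuits

section Rows

variable {ι : Type} [Fintype ι] [DecidableEq ι] (A : Matrix ι ι RMax) (C : MultiCircuit ι)
  (x : Vec ι)

lemma mpMulVec_matC_of_mem {i : ι} (hi : i ∈ C.verts) :
    mpMulVec (matC A C) x i = A i (C.perm i) + x (C.perm i) := by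
  refine (sup_eq_of_forall_ne_eq_bot (mem_univ (C.perm i)) fun j _ hj => ?_).trans ?_
  · simp [matC, hj]
  · simp [matC, hi]

lemma mpMulVec_matC_of_notMem {i : ι} (hi : i ∉ C.verts) : mpMulVec (matC A C) x i = ⊥ :=
  (Finset.sup_eq_bot_iff _ _).mpr fun j _ => by simp [matC, hi]

lemma mpMulVec_matNotC_of_mem {i : ι} (hi : i ∈ C.verts) :
    mpMulVec (matNotC A C) x i = (univ.erase (C.perm i)).sup fun j => A i j + x j := by
  conv_lhs => rw [mpMulVec, ← insert_erase (mem_univ (C.perm i)), sup_insert]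
  simp only [matNotC, hi, true_and, if_pos, WithBot.bot_add, bot_sup_eq]
  exact sup_congr rfl fun j hj => by rw [if_neg (ne_of_mem_erase hj)]

lemma mpMulVec_matNotC_of_notMem {i : ι} (hi : i ∉ C.verts) :
    mpMulVec (matNotC A C) x i = univ.sup fun j => A i j + x j := by
  simp [mpMulVec, matNotC, hi]

lemma le_sup_erase_of_mpMulVec_matNotC_eq
    (hx : mpMulVec (matNotC A C) x = mpMulVec (matC A C) x) (i j : ι) :
    A i j + x j ≤ (univ.erase j).sup fun m => A i m + x m := by
  have hrow := congrFun hx i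
  by_cases hi : i ∈ C.verts
  · rw [mpMulVec_matNotC_of_mem A C x hi, mpMulVec_matC_of_mem A C x hi] at hrow
    exact le_sup_erase_of_sup_erase_eq hrow j
  · rw [mpMulVec_matNotC_of_notMem A C x hi, mpMulVec_matC_of_notMem A C x hi] at hrow
    have hj : A i j + x j = ⊥ :=
      le_bot_iff.mp (hrow ▸ le_sup (f := fun m => A i m + x m) (mem_univ j))
    rw [hj]
    exact bot_le

end Rows

section Xi

variable {ι : Type} [DecidableEq ι] (A : Matrix ι ι RMax) (C : MultiCircuit ι)

/-- The vector `b = [A_C]_{KK}^{−1} ⊗ [A]_{KL} ⊗ [x]_L`, so that `[ξ_{A,C}(x)]_K = M* ⊗ b`. -/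
def xiOffset [Fintype ι] (x : Vec ι) : Vec {k // k ∈ C.verts} :=
  mpMulVec (genInv (subPC A C))
    (fun k => (univ.filter fun j : ι => j ∉ C.verts).sup fun j => A k.1 j + x j)

lemma genInv_subPC_mpMulVec (v : Vec {k // k ∈ C.verts}) (k : {k // k ∈ C.verts}) :
    mpMulVec (genInv (subPC A C)) v k =
      mpNeg (A (C.perm.symm k) k) + v ⟨C.perm.symm k, C.perm_symm_mem k.2⟩ := by
  refine (sup_eq_of_forall_ne_eq_bot (c := ⟨C.perm.symm k, C.perm_symm_mem k.2⟩) (mem_univ _)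
    fun i _ hi => ?_).trans ?_
  · have hik : k.1 ≠ C.perm i := fun h =>
      hi (Subtype.ext (show i.1 = C.perm.symm k.1 by rw [h, Equiv.symm_apply_apply]))
    simp [genInv, subPC, matC, hik, mpNeg]
  · simp [genInv, subPC, matC, C.perm_symm_mem k.2]

lemma xiM_apply [Fintype ι] (k m : {k // k ∈ C.verts}) :
    xiM A C k m = mpNeg (A (C.perm.symm k) k) + matNotC A C (C.perm.symm k) m :=
  genInv_subPC_mpMulVec A C (fun i => subPNC A C i m) k

lemma le_max_mpMulVec_xiM_xiOffset [Fintype ι] (hC : InGraph A C) {x : Vec ι}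
    (hrow : ∀ i j, A i j + x j ≤ (univ.erase j).sup fun m => A i m + x m)
    (k : {k // k ∈ C.verts}) :
    x k ≤ max (mpMulVec (xiM A C) (fun k' => x k') k) (xiOffset A C x k) := by
  set i := C.perm.symm k
  have hi : i ∈ C.verts := C.perm_symm_mem k.2
  have hik : C.perm i = k := Equiv.apply_symm_apply _ _
  have ha : A i k ≠ ⊥ := hik ▸ hC i hi
  rw [← WithBot.add_le_add_iff_left ha]
  refine (hrow i k).trans (Finset.sup_le fun m hm => ?_)
  by_cases hmK : m ∈ C.verts
  · have hmi : matNotC A C i m = A i m := if_neg fun h => ne_of_mem_erase hm (h.2.trans hik)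
    calc A i m + x m = A i k + (xiM A C k (⟨m, hmK⟩ : {k // k ∈ C.verts}) + x m) := by
          rw [xiM_apply, add_assoc, add_mpNeg_add ha, hmi]
      _ ≤ A i k + mpMulVec (xiM A C) (fun k' => x k') k := by
          gcongr
          exact le_sup (f := fun m' => xiM A C k m' + x m') (mem_univ (⟨m, hmK⟩ : {k // k ∈ C.verts}))
      _ ≤ _ := by gcongr; exact le_max_left _ _
  · calc A i m + x m ≤ (univ.filter fun j : ι => j ∉ C.verts).sup fun j => A i j + x j :=
          le_sup (f := fun j => A i j + x j) (mem_filter.mpr ⟨mem_univ m, hmK⟩)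
      _ = A i k + xiOffset A C x k := by rw [xiOffset, genInv_subPC_mpMulVec, add_mpNeg_add ha]
      _ ≤ _ := by gcongr; exact le_max_right _ _

end Xi

section KleeneStar

variable {κ : Type} (M : Matrix κ κ RMax)

def walkWeight (g : ℕ → κ) (p : ℕ) : RMax :=
  ∑ s ∈ range p, M (g s) (g (s + 1))

lemma walkWeight_add (g : ℕ → κ) (m n : ℕ) :
    walkWeight M g (m + n) = walkWeight M g m + walkWeight M (fun s => g (m + s)) n :=
  sum_range_add _ m n

lemma le_walkWeight_add_of_forall_le {x : Vec κ} {g : ℕ → κ}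
    (h : ∀ s, x (g s) ≤ M (g s) (g (s + 1)) + x (g (s + 1))) (p : ℕ) :
    x (g 0) ≤ walkWeight M g p + x (g p) := by
  induction p with
  | zero => simp [walkWeight]
  | succ p ih =>
    calc x (g 0) ≤ walkWeight M g p + x (g p) := ih
      _ ≤ walkWeight M g p + (M (g p) (g (p + 1)) + x (g (p + 1))) := by gcongr; exact h p
      _ = walkWeight M g (p + 1) + x (g (p + 1)) := by
          rw [walkWeight, walkWeight, sum_range_succ, add_assoc]

def CircuitsNeg : Prop :=
  ∀ D : MultiCircuit κ, IsCircuit D → InGraph M D → mcWeight M D < 0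

lemma exists_isCircuit_mcWeight_eq_walkWeight [DecidableEq κ] {g : ℕ → κ} {p : ℕ} (hp : 0 < p)
    (hcl : g p = g 0) (hinj : ∀ s < p, ∀ t < p, g s = g t → s = t) :
    ∃ D : MultiCircuit κ, IsCircuit D ∧ mcWeight M D = walkWeight M g p := by
  set l : List κ := (List.range p).map g
  have hlen : l.length = p := by simp [l]
  have hget : ∀ s (hs : s < l.length), l[s] = g s := by simp [l]
  have hnd : l.Nodup := List.Nodup.map_on
    (fun s hs t ht h => hinj s (by simpa using hs) t (by simpa using ht) h) List.nodup_range
  have hmem : ∀ a, a ∈ l.toFinset ↔ ∃ s < p, g s = a := by simp [l]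
  have hpow : ∀ s < p, (l.formPerm ^ s) (g 0) = g s := by
    intro s hs
    have h := List.formPerm_pow_apply_getElem l hnd s 0 (by omega)
    rwa [hget, hget, hlen, zero_add, Nat.mod_eq_of_lt hs] at h
  have hsucc : ∀ s < p, l.formPerm (g s) = g (s + 1) := by
    intro s hs
    have h := List.formPerm_apply_getElem l hnd s (by omega)
    rw [hget, hget, hlen] at h
    rw [h]
    rcases (by omega : s + 1 < p ∨ s + 1 = p) with h' | h'
    · rw [Nat.mod_eq_of_lt h']
    · rw [h', Nat.mod_self, hcl]
  refine ⟨⟨l.toFinset, l.formPerm, fun a ha => List.formPerm_apply_of_notMem (by simpa using ha)⟩,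
    ⟨⟨g 0, (hmem _).mpr ⟨0, hp, rfl⟩⟩, ?_⟩, ?_⟩
  · intro a ha b hb
    obtain ⟨s, hs, rfl⟩ := (hmem a).mp ha
    obtain ⟨t, ht, rfl⟩ := (hmem b).mp hb
    have hs' : l.formPerm.SameCycle (g 0) (g s) := ⟨s, by simpa using hpow s hs⟩
    exact hs'.symm.trans ⟨t, by simpa using hpow t ht⟩
  · have himg : l.toFinset = (range p).image g := by
      ext a
      simp [hmem]
    change ∑ a ∈ l.toFinset, M a (l.formPerm a) = _
    rw [himg, sum_image fun s hs t ht => hinj s (mem_range.mp hs) t (mem_range.mp ht), walkWeight]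
    exact sum_congr rfl fun s hs => by rw [hsucc s (mem_range.mp hs)]

variable {M}

lemma CircuitsNeg.walkWeight_neg [DecidableEq κ] (hM : CircuitsNeg M) {g : ℕ → κ} {p : ℕ}
    (hp : 0 < p) (hcl : g p = g 0) (hinj : ∀ s < p, ∀ t < p, g s = g t → s = t) :
    walkWeight M g p < 0 := by
  obtain ⟨D, hD, hw⟩ := exists_isCircuit_mcWeight_eq_walkWeight M hp hcl hinj
  rw [← hw]
  by_cases hbot : mcWeight M D = ⊥
  · rw [hbot]
    exact WithBot.bot_lt_coe 0
  · exact hM D hD (inGraph_of_mcWeight_ne_bot hbot)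

lemma exists_closed_segment [Fintype κ] (g : ℕ → κ) :
    ∃ s₁ d, 0 < d ∧ s₁ + d ≤ Fintype.card κ ∧ g (s₁ + d) = g s₁ ∧
      ∀ s < d, ∀ t < d, g (s₁ + s) = g (s₁ + t) → s = t := by
  classical
  have hrep : ∃ n ≤ Fintype.card κ, ∃ s < n, g s = g n := by
    obtain ⟨a, b, hab, he⟩ := Fintype.exists_ne_map_eq_of_card_lt
      (fun s : Fin (Fintype.card κ + 1) => g s) (by simp)
    have := a.isLt
    have := b.isLt
    rcases lt_or_gt_of_ne (Fin.val_ne_of_ne hab) with h | h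
    · exact ⟨b, by omega, a, h, he⟩
    · exact ⟨a, by omega, b, h, he.symm⟩
  have hex : ∃ n, ∃ s < n, g s = g n := hrep.imp fun _ h => h.2
  obtain ⟨s₁, hs₁, he⟩ := Nat.find_spec hex
  refine ⟨s₁, Nat.find hex - s₁, by omega, ?_, ?_, ?_⟩
  · obtain ⟨n, hn, hn'⟩ := hrep
    have := Nat.find_min' hex hn'
    omega
  · rw [show s₁ + (Nat.find hex - s₁) = Nat.find hex by omega, he]
  · intro s hs t ht hst
    by_contra hne
    rcases lt_or_gt_of_ne hne with h | h
    · exact Nat.find_min hex (show s₁ + t < Nat.find hex by omega) ⟨s₁ + s, by omega, hst⟩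
    · exact Nat.find_min hex (show s₁ + s < Nat.find hex by omega) ⟨s₁ + t, by omega, hst.symm⟩

lemma CircuitsNeg.exists_closed_segment_neg [Fintype κ] [DecidableEq κ] (hM : CircuitsNeg M)
    (g : ℕ → κ) :
    ∃ s₁ d, 0 < d ∧ s₁ + d ≤ Fintype.card κ ∧ g (s₁ + d) = g s₁ ∧
      walkWeight M (fun s => g (s₁ + s)) d < 0 := by
  obtain ⟨s₁, d, hd, hle, hcl, hinj⟩ := exists_closed_segment g
  exact ⟨s₁, d, hd, hle, hcl, hM.walkWeight_neg (g := fun s => g (s₁ + s)) hd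
    (by simpa using hcl) hinj⟩

variable (M) [Fintype κ] [DecidableEq κ]

lemma walkWeight_le_mpPow (g : ℕ → κ) (p : ℕ) : walkWeight M g p ≤ mpPow M p (g 0) (g p) := by
  induction p generalizing g with
  | zero => simp [walkWeight, mpPow, mpId]
  | succ p ih =>
    calc walkWeight M g (p + 1) = M (g 0) (g 1) + walkWeight M (fun s => g (s + 1)) p := by
          rw [walkWeight, sum_range_succ', add_comm]
          rfl
      _ ≤ M (g 0) (g 1) + mpPow M p (g 1) (g (p + 1)) := by gcongr; exact ih _
      _ ≤ mpPow M (p + 1) (g 0) (g (p + 1)) :=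
          le_sup (f := fun k => M (g 0) k + mpPow M p k (g (p + 1))) (mem_univ (g 1))

lemma exists_walk_of_mpPow_ne_bot (p : ℕ) (i j : κ) (h : mpPow M p i j ≠ ⊥) :
    ∃ g : ℕ → κ, g 0 = i ∧ g p = j ∧ mpPow M p i j = walkWeight M g p := by
  induction p generalizing i with
  | zero =>
    have hij : i = j := by
      by_contra hij
      simp [mpPow, mpId, hij] at h
    exact ⟨fun _ => i, rfl, hij, by simp [walkWeight, mpPow, mpId, hij]⟩
  | succ p ih =>
    obtain ⟨k, -, hk⟩ := exists_mem_eq_sup univ ⟨i, mem_univ i⟩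
      (fun k => M i k + mpPow M p k j)
    have hval : mpPow M (p + 1) i j = M i k + mpPow M p k j := hk
    obtain ⟨g, hg0, hgp, hw⟩ := ih k fun hb => h (by rw [hval, hb, WithBot.add_bot])
    refine ⟨fun s => if s = 0 then i else g (s - 1), by simp, by simp [hgp], ?_⟩
    rw [hval, hw, walkWeight, walkWeight, sum_range_succ', add_comm]
    simp [hg0]

/-- Cutting a closed segment out of a walk leaves a walk with the same endpoints. -/
lemma walkWeight_le_of_closed_segment (g : ℕ → κ) (s₁ d r : ℕ) (hcl : g (s₁ + d) = g s₁) :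
    walkWeight M g (s₁ + d + r) ≤
      walkWeight M (fun s => g (s₁ + s)) d + mpPow M (s₁ + r) (g 0) (g (s₁ + d + r)) := by
  set g' : ℕ → κ := fun s => if s ≤ s₁ then g s else g (s + d)
  have hhead : walkWeight M g' s₁ = walkWeight M g s₁ :=
    sum_congr rfl fun s hs => by
      have := mem_range.mp hs
      simp only [g', if_pos this.le, if_pos (Nat.succ_le_of_lt this)]
  have htail : (fun s => g' (s₁ + s)) = fun s => g (s₁ + d + s) := by
    funext s
    rcases Nat.eq_zero_or_pos s with rfl | hs
    · simp [g', hcl]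
    · simp only [g', if_neg (by omega : ¬s₁ + s ≤ s₁)]
      rw [add_right_comm]
  calc walkWeight M g (s₁ + d + r)
      = walkWeight M (fun s => g (s₁ + s)) d + (walkWeight M g s₁ +
          walkWeight M (fun s => g (s₁ + d + s)) r) := by
        rw [walkWeight_add, walkWeight_add]
        ac_rfl
    _ = walkWeight M (fun s => g (s₁ + s)) d + walkWeight M g' (s₁ + r) := by
        rw [walkWeight_add M g', hhead, htail]
    _ ≤ _ := by
        gcongr
        simpa [g', congrFun htail r] using walkWeight_le_mpPow M g' (s₁ + r)

lemma mpPow_le_mpStar (hM : CircuitsNeg M) (p : ℕ) (i j : κ) : mpPow M p i j ≤ mpStar M i j := by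
  induction p using Nat.strong_induction_on generalizing i j with
  | _ p ih =>
  by_cases hp : p < Fintype.card κ
  · exact le_sup (f := fun k => mpPow M k i j) (mem_range.mpr hp)
  by_cases hbot : mpPow M p i j = ⊥
  · rw [hbot]
    exact bot_le
  obtain ⟨g, rfl, rfl, hw⟩ := exists_walk_of_mpPow_ne_bot M p i j hbot
  obtain ⟨s₁, d, hd, hle, hcl, hneg⟩ := hM.exists_closed_segment_neg g
  obtain ⟨r, rfl⟩ : ∃ r, p = s₁ + d + r := ⟨p - (s₁ + d), by omega⟩
  calc mpPow M (s₁ + d + r) (g 0) (g (s₁ + d + r))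
      = walkWeight M g (s₁ + d + r) := hw
    _ ≤ walkWeight M (fun s => g (s₁ + s)) d + mpPow M (s₁ + r) (g 0) (g (s₁ + d + r)) :=
        walkWeight_le_of_closed_segment M g s₁ d r hcl
    _ ≤ 0 + mpStar M (g 0) (g (s₁ + d + r)) := add_le_add hneg.le (ih _ (by omega) _ _)
    _ = mpStar M (g 0) (g (s₁ + d + r)) := zero_add _

lemma le_mpStar_mulVec (b : Vec κ) (k : κ) : b k ≤ mpMulVec (mpStar M) b k := by
  have hdiag : (0 : RMax) ≤ mpStar M k k := by
    have hk : mpPow M 0 k k = 0 := by simp [mpPow, mpId]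
    exact hk ▸ le_sup (f := fun t => mpPow M t k k)
      (mem_range.mpr (Fintype.card_pos_iff.mpr ⟨k⟩))
  calc b k = 0 + b k := (zero_add _).symm
    _ ≤ mpStar M k k + b k := by gcongr
    _ ≤ mpMulVec (mpStar M) b k := le_sup (f := fun i => mpStar M k i + b i) (mem_univ k)

lemma mpMulVec_mpMulVec_mpStar_le (hM : CircuitsNeg M) (b : Vec κ) (k : κ) :
    mpMulVec M (mpMulVec (mpStar M) b) k ≤ mpMulVec (mpStar M) b k := by
  refine Finset.sup_le fun j _ => ?_
  rw [mpMulVec, add_finset_sup]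
  refine Finset.sup_le fun i _ => ?_
  have hstar : M k j + mpStar M j i ≤ mpStar M k i := by
    rw [mpStar, add_finset_sup]
    refine Finset.sup_le fun t _ => le_trans ?_ (mpPow_le_mpStar M hM (t + 1) k i)
    exact le_sup (f := fun m => M k m + mpPow M t m i) (mem_univ j)
  calc M k j + (mpStar M j i + b i) = M k j + mpStar M j i + b i := (add_assoc _ _ _).symm
    _ ≤ mpStar M k i + b i := by gcongr
    _ ≤ mpMulVec (mpStar M) b k := le_sup (f := fun i => mpStar M k i + b i) (mem_univ i)

lemma le_mpStar_mulVec_of_le_max (hM : CircuitsNeg M) {b x : Vec κ}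
    (h : ∀ k, x k ≤ max (mpMulVec M x k) (b k)) (k : κ) : x k ≤ mpMulVec (mpStar M) b k := by
  set y := mpMulVec (mpStar M) b
  have hnext : ∀ k, ¬x k ≤ y k → ∃ j, ¬x j ≤ y j ∧ x k ≤ M k j + x j := by
    intro k hk
    have hxk : x k ≤ mpMulVec M x k :=
      (le_max_iff.mp (h k)).resolve_right fun hb => hk (hb.trans (le_mpStar_mulVec M b k))
    obtain ⟨j, -, hj⟩ := exists_mem_eq_sup univ ⟨k, mem_univ k⟩ fun j => M k j + x j
    have hkj : x k ≤ M k j + x j := hj ▸ hxk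
    refine ⟨j, fun hjy => hk ?_, hkj⟩
    calc x k ≤ M k j + y j := hkj.trans (by gcongr)
      _ ≤ mpMulVec M y k := le_sup (f := fun j => M k j + y j) (mem_univ j)
      _ ≤ y k := mpMulVec_mpMulVec_mpStar_le M hM b k
  by_contra hk
  choose! F hFbad hFle using hnext
  set g : ℕ → κ := fun s => F^[s] k
  have hsucc : ∀ s, g (s + 1) = F (g s) := fun s => Function.iterate_succ_apply' F s k
  have hbad : ∀ s, ¬x (g s) ≤ y (g s) := by
    intro s
    induction s with
    | zero => exact hk
    | succ s ih => exact hsucc s ▸ hFbad _ ih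
  have hchain : ∀ s, x (g s) ≤ M (g s) (g (s + 1)) + x (g (s + 1)) :=
    fun s => hsucc s ▸ hFle _ (hbad s)
  obtain ⟨s₁, d, -, -, hcl, hneg⟩ := hM.exists_closed_segment_neg g
  have hle := le_walkWeight_add_of_forall_le M (g := fun s => g (s₁ + s)) (fun s => hchain _) d
  simp only [add_zero, hcl] at hle
  have hfin : x (g s₁) ≠ ⊥ := fun h => hbad s₁ (h ▸ bot_le)
  exact hle.not_gt (by simpa using (WithBot.add_lt_add_iff_right hfin).mpr hneg)

end KleeneStar

theorem xi_ge_of_WAC_general {n : ℕ} (A : Matrix (Fin n) (Fin n) RMax)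
    (C₁ C₂ : MultiCircuit (Fin n))
    (h₂ : IsLamMax A C₂ (⊥ : RMax))
    (hwd : ∀ D : MultiCircuit {k // k ∈ C₂.verts}, IsCircuit D → InGraph (xiM A C₂) D →
      mcWeight (xiM A C₂) D < 0)
    (x : Vec (Fin n)) (hx : mpMulVec (matNotC A C₁) x = mpMulVec (matC A C₁) x) :
    ∀ i : Fin n, x i ≤ xi A C₂ x i := by
  intro i
  by_cases hi : i ∈ C₂.verts
  · rw [xi, dif_pos hi]
    exact le_mpStar_mulVec_of_le_max (xiM A C₂) hwd
      (le_max_mpMulVec_xiM_xiOffset A C₂ h₂.inGraph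
        (le_sup_erase_of_mpMulVec_matNotC_eq A C₁ x hx)) ⟨i, hi⟩
  · rw [xi, dif_neg hi]

theorem xi_ge_of_WAC {n : ℕ} (A : Matrix (Fin n) (Fin n) RMax)
    (C₁ C₂ : MultiCircuit (Fin n))
    (h₁ : IsLamMax A C₁ (⊥ : RMax)) (h₂ : IsLamMax A C₂ (⊥ : RMax))
    (hwd : ∀ D : MultiCircuit {k // k ∈ C₂.verts}, IsCircuit D → InGraph (xiM A C₂) D →
      mcWeight (xiM A C₂) D < 0)
    (x : Vec (Fin n)) (hx : mpMulVec (matNotC A C₁) x = mpMulVec (matC A C₁) x) :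
    ∀ i : Fin n, x i ≤ xi A C₂ x i :=
  xi_ge_of_WAC_general A C₁ C₂ h₂ hwd x hx
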